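/- arXiv:1803.05812 — 2 statements merged into one kernel-verified Lean document; each statement's English description precedes it below -/
import Mathlib

section
/- Let (M, F, μ) be a measure space admitting a continuous resolution, and let A ∈ F with μ(A) > 0. Then there exists a countable partition of A into pairwise disjoint measurable sets {B_n}_{n=1}^∞ with 0 < μ(B_n) < ∞ for all n. -/
open MeasureTheory Filter

/-- A continuous resolution for a measure space `(M, μ)`: a family `(A x)_{x ≥ 0}` of
measurable sets with `μ (A 0) = 0`, monotone in `x`, each of finite measure, whose
indicator functions converge μ-a.e. as `x → y` (within `[0, ∞)`), and whose union is `M`. -/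
structure ContinuousResolution {M : Type} [MeasurableSpace M] (μ : Measure M)
    (A : ℝ → Set M) : Prop where
  measurable : ∀ x, 0 ≤ x → MeasurableSet (A x)
  zero : μ (A 0) = 0
  mono : ∀ x y, 0 ≤ x → x ≤ y → A x ⊆ A y
  finite : ∀ x, 0 ≤ x → μ (A x) < ⊤
  cont : ∀ y, 0 ≤ y → ∀ᵐ p ∂μ,
    Tendsto (fun x => Set.indicator (A x) (fun _ => (1 : ℝ)) p)
      (nhdsWithin y (Set.Ici 0)) (nhds (Set.indicator (A y) (fun _ => (1 : ℝ)) p))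
  covers : ⋃ x ∈ Set.Ici (0 : ℝ), A x = Set.univ

/-!
The function `z ↦ μ (A z ∩ S)` is continuous and monotone on `[0, ∞)`, vanishes at `0` and
tends to `μ S`. By the intermediate value theorem it takes every value of a strictly increasing
sequence of levels in `(0, μ S)` converging to `μ S`; the corresponding sets `A (x n) ∩ S` exhaust
`S` up to a null set, and their successive differences form the partition.
-/

open Set Topology ENNReal

variable {M : Type} [MeasurableSpace M] {μ : Measure M}

lemma measure_disjointed_pos_of_strictMono {C : ℕ → Set M} (hC : Monotone C)
    (h0 : 0 < μ (C 0)) (hμC : StrictMono fun n ↦ μ (C n)) (n : ℕ) :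
    0 < μ (disjointed C n) := by
  cases n with
  | zero => rwa [disjointed_zero]
  | succ n =>
    rw [hC.disjointed_add_one]
    exact (tsub_pos_of_lt (hμC n.lt_succ_self)).trans_le le_measure_sdiff

namespace ContinuousResolution

variable {A : ℝ → Set M}

lemma measure_inter_lt_top (hA : ContinuousResolution μ A) (S : Set M) {z : ℝ} (hz : 0 ≤ z) :
    μ (A z ∩ S) < ⊤ :=
  (measure_mono inter_subset_left).trans_lt (hA.finite z hz)

lemma measure_inter_mono (hA : ContinuousResolution μ A) (S : Set M) {z w : ℝ} (hz : 0 ≤ z)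
    (hzw : z ≤ w) : μ (A z ∩ S) ≤ μ (A w ∩ S) :=
  measure_mono (inter_subset_inter_left _ (hA.mono z w hz hzw))

lemma iUnion_nat (hA : ContinuousResolution μ A) : ⋃ n : ℕ, A n = univ := by
  refine eq_univ_of_forall fun p ↦ ?_
  obtain ⟨z, hz, hpz⟩ := mem_iUnion₂.1 (hA.covers ▸ mem_univ p)
  exact mem_iUnion.2 ⟨⌈z⌉₊, hA.mono z _ hz (Nat.le_ceil z) hpz⟩

lemma tendsto_measure_inter_nat (hA : ContinuousResolution μ A) (S : Set M) :
    Tendsto (fun n : ℕ ↦ μ (A n ∩ S)) atTop (𝓝 (μ S)) := by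
  have hmono : Monotone fun n : ℕ ↦ A n ∩ S := fun a b hab ↦
    inter_subset_inter_left _ (hA.mono a b a.cast_nonneg (Nat.cast_le.2 hab))
  simpa only [← iUnion_inter, hA.iUnion_nat, univ_inter, Function.comp_def] using
    tendsto_measure_iUnion_atTop hmono

lemma continuousOn_measure_inter (hA : ContinuousResolution μ A) (S : Set M) :
    ContinuousOn (fun z ↦ μ (A z ∩ S)) (Ici 0) := by
  intro y hy
  -- Pass to the subtype `Ici 0`, on which every `A z` is measurable.
  rw [ContinuousWithinAt, tendsto_nhdsWithin_iff_subtype hy]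
  have hmeas : ∀ z : Ici (0 : ℝ), MeasurableSet (A z) := fun z ↦ hA.measurable z z.2
  have hy1 : (0 : ℝ) ≤ y + 1 := by linarith [mem_Ici.1 hy]
  have hlim := tendsto_measure_of_ae_tendsto_indicator (μ := μ.restrict S) (𝓝 ⟨y, hy⟩)
    (hmeas ⟨y, hy⟩) hmeas (hA.measurable _ hy1) ?_ ?_ ?_
  · simp only [Measure.restrict_apply (hmeas _), Measure.restrict_apply (hA.measurable y hy)]
      at hlim
    exact hlim
  · rw [Measure.restrict_apply (hA.measurable _ hy1)]
    exact (hA.measure_inter_lt_top S hy1).ne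
  · filter_upwards [(continuous_subtype_val.tendsto _).eventually (eventually_le_nhds
      (lt_add_one y))] with z hz using hA.mono z _ z.2 hz
  · filter_upwards [ae_restrict_of_ae (hA.cont y hy)] with p hp
    exact (tendsto_indicator_const_apply_iff_eventually (𝓝 (⟨y, hy⟩ : Ici (0 : ℝ))) (1 : ℝ) p).1
      ((tendsto_nhdsWithin_iff_subtype hy _ _).1 hp)

lemma exists_measure_inter_eq (hA : ContinuousResolution μ A) (S : Set M) {t : ℝ≥0∞}
    (ht : t < μ S) : ∃ z, 0 ≤ z ∧ μ (A z ∩ S) = t := by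
  obtain ⟨n, hn⟩ := ((hA.tendsto_measure_inter_nat S).eventually (eventually_gt_nhds ht)).exists
  have hn0 : (0 : ℝ) ≤ n := n.cast_nonneg
  have hzero : μ (A 0 ∩ S) = 0 := measure_mono_null inter_subset_left hA.zero
  obtain ⟨z, hz, hzt⟩ := intermediate_value_Icc hn0
    ((hA.continuousOn_measure_inter S).mono Icc_subset_Ici_self) ⟨hzero ▸ zero_le, hn.le⟩
  exact ⟨z, hz.1, hzt⟩

lemma exists_monotone_measure_inter_eq (hA : ContinuousResolution μ A) (S : Set M)
    {u : ℕ → ℝ≥0∞} (hu : StrictMono u) (huS : ∀ n, u n < μ S) :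
    ∃ x : ℕ → ℝ, (∀ n, 0 ≤ x n) ∧ Monotone x ∧ ∀ n, μ (A (x n) ∩ S) = u n := by
  choose x hx0 hxu using fun n ↦ hA.exists_measure_inter_eq S (huS n)
  refine ⟨x, hx0, fun a b hab ↦ ?_, hxu⟩
  by_contra! hba
  have hle := hA.measure_inter_mono S (hx0 b) hba.le
  rw [hxu, hxu] at hle
  obtain rfl := hab.antisymm (hu.le_iff_le.1 hle)
  exact hba.false

lemma measure_sdiff_iUnion_eq_zero (hA : ContinuousResolution μ A) {S : Set M} {x : ℕ → ℝ}
    (hx0 : ∀ n, 0 ≤ x n) (hx : Monotone x)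
    (hlim : Tendsto (fun n ↦ μ (A (x n) ∩ S)) atTop (𝓝 (μ S))) :
    μ (S \ ⋃ n, A (x n)) = 0 := by
  rcases eq_top_or_lt_top (μ S) with hS | hS
  -- If `μ S = ∞`, the levels eventually exceed the finite `μ (A m ∩ S)`, so some `x n` passes `m`.
  · suffices S ⊆ ⋃ n, A (x n) by rw [sdiff_eq_empty.2 this, measure_empty]
    intro p hp
    obtain ⟨m, hm⟩ := mem_iUnion.1 (hA.iUnion_nat ▸ mem_univ p)
    have hm0 : (0 : ℝ) ≤ m := m.cast_nonneg
    obtain ⟨n, hn⟩ := (hlim.eventually (eventually_gt_nhds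
      (hS ▸ hA.measure_inter_lt_top S hm0))).exists
    have hmn : (m : ℝ) ≤ x n := by
      by_contra! h
      exact (hA.measure_inter_mono S (hx0 n) h.le).not_gt hn
    exact mem_iUnion.2 ⟨n, hA.mono _ _ hm0 hmn hm⟩
  · have hmono : Monotone fun n ↦ A (x n) ∩ S := fun a b hab ↦
      inter_subset_inter_left _ (hA.mono _ _ (hx0 a) (hx hab))
    have hU : μ (S ∩ ⋃ n, A (x n)) = μ S := by
      rw [inter_comm, iUnion_inter]
      exact tendsto_nhds_unique (tendsto_measure_iUnion_atTop hmono) hlim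
    have := measure_inter_add_sdiff S (.iUnion fun n ↦ hA.measurable _ (hx0 n)) (μ := μ)
    rw [hU] at this
    exact (ENNReal.add_right_inj hS.ne).1 (this.trans (add_zero _).symm)

lemma exists_monotone_exhaustion (hA : ContinuousResolution μ A) {S : Set M}
    (hS : MeasurableSet S) (hpos : 0 < μ S) :
    ∃ C : ℕ → Set M, (∀ n, MeasurableSet (C n)) ∧ Monotone C ∧ 0 < μ (C 0) ∧
      StrictMono (fun n ↦ μ (C n)) ∧ (∀ n, μ (C n) < ⊤) ∧ ⋃ n, C n = S := by
  obtain ⟨u, hu, huS, hlim⟩ := exists_seq_strictMono_tendsto' hpos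
  obtain ⟨x, hx0, hx, hxu⟩ := hA.exists_monotone_measure_inter_eq S hu fun n ↦ (huS n).2
  set N := S \ ⋃ n, A (x n)
  have hN : μ N = 0 := hA.measure_sdiff_iUnion_eq_zero hx0 hx (by simpa only [hxu] using hlim)
  have hμC : ∀ n, μ (A (x n) ∩ S ∪ N) = u n := fun n ↦ by
    rw [measure_congr (union_ae_eq_left_of_ae_eq_empty (ae_eq_empty.2 hN)), hxu]
  refine ⟨fun n ↦ A (x n) ∩ S ∪ N, fun n ↦ ?_, fun a b hab ↦ ?_, ?_, ?_, fun n ↦ ?_, ?_⟩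
  · exact ((hA.measurable _ (hx0 n)).inter hS).union
      (hS.diff (.iUnion fun n ↦ hA.measurable _ (hx0 n)))
  · exact union_subset_union_left _ (inter_subset_inter_left _ (hA.mono _ _ (hx0 a) (hx hab)))
  · simpa only [hμC] using (huS 0).1
  · simpa only [hμC] using hu
  · simpa only [hμC] using (huS n).2.trans_le le_top
  · rw [← iUnion_union, ← iUnion_inter, inter_comm, inter_union_sdiff]

end ContinuousResolution

/-- If `(M, μ)` admits a continuous resolution and `S` is measurable with
`μ S > 0`, then `S` can be partitioned into countably many pairwise disjoint measurable sets
`B n` with `0 < μ (B n) < ∞`. -/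
theorem stmt3 {M : Type} [MeasurableSpace M] (μ : Measure M) (A : ℝ → Set M)
    (hA : ContinuousResolution μ A) (S : Set M) (hS : MeasurableSet S) (hpos : 0 < μ S) :
    ∃ B : ℕ → Set M, (∀ n, MeasurableSet (B n)) ∧ Pairwise (Function.onFun Disjoint B) ∧
      (∀ n, 0 < μ (B n) ∧ μ (B n) < ⊤) ∧ (⋃ n, B n) = S := by
  obtain ⟨C, hCm, hC, hC0, hμC, hCfin, hCS⟩ := hA.exists_monotone_exhaustion hS hpos
  refine ⟨disjointed C, .disjointed hCm, disjoint_disjointed C, fun n ↦ ⟨?_, ?_⟩, ?_⟩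
  · exact measure_disjointed_pos_of_strictMono hC hC0 hμC n
  · exact (measure_mono (disjointed_subset C n)).trans_lt (hCfin n)
  · rw [iUnion_disjointed, hCS]
end

section
/- Let A and B be selfadjoint operators on a Hilbert space H₂ such that B is A-bounded with relative bound a, and let C be a bounded operator on a Hilbert space H₁. Then C ⊗ B is (1 ⊗ A)-bounded with relative bound at most a·‖C‖ on the tensor product H₁ ⊗ H₂. -/
/-!
Every `z ∈ S` can be written as `∑ i, e i ⊗ y i` with `(e i)` orthonormal in `H₁` and
`y i ∈ D(A)`. For such sums `‖∑ i, e i ⊗ w i‖` is the `ℓ²` norm of `(‖w i‖)ᵢ`, so the pointwise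
bound `‖B y‖ ≤ (a + ε) ‖A y‖ + b ‖y‖` passes to `1 ⊗ B` by the triangle inequality in `ℓ²`.
The factor `C ⊗ 1` costs at most `‖C‖`, as one sees by expanding the second factors in an
orthonormal family of `H₂` instead.
-/

open scoped InnerProductSpace

theorem LinearMap.sum_apply_sum_smul {R M N P ι κ : Type*} [CommSemiring R]
    [AddCommMonoid M] [AddCommMonoid N] [AddCommMonoid P] [Module R M] [Module R N] [Module R P]
    [Fintype ι] [Fintype κ] (β : M →ₗ[R] N →ₗ[R] P) (u : ι → M) (f : κ → N) (c : ι → κ → R) :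
    ∑ i, β (u i) (∑ j, c i j • f j) = ∑ j, β (∑ i, c i j • u i) (f j) := by
  simp only [map_sum, map_smul, LinearMap.sum_apply, LinearMap.smul_apply]
  exact Finset.sum_comm

theorem PiLp.norm_le_norm_of_forall_norm_le {ι : Type*} [Fintype ι] {β γ : ι → Type*}
    [∀ i, SeminormedAddCommGroup (β i)] [∀ i, SeminormedAddCommGroup (γ i)]
    {x : PiLp 2 β} {y : PiLp 2 γ} (h : ∀ i, ‖x i‖ ≤ ‖y i‖) : ‖x‖ ≤ ‖y‖ := by
  rw [PiLp.norm_eq_of_L2, PiLp.norm_eq_of_L2]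
  gcongr with i
  exact h i

theorem exists_orthonormal_expansion {𝕜 E : Type*} [RCLike 𝕜] [NormedAddCommGroup E]
    [InnerProductSpace 𝕜 E] {n : ℕ} (u : Fin n → E) :
    ∃ (m : ℕ) (e : Fin m → E) (c : Fin n → Fin m → 𝕜),
      Orthonormal 𝕜 e ∧ ∀ i, u i = ∑ j, c i j • e j := by
  let V := Submodule.span 𝕜 (Set.range u)
  have : FiniteDimensional 𝕜 V := FiniteDimensional.span_of_finite 𝕜 (Set.finite_range u)
  let b := stdOrthonormalBasis 𝕜 V
  have hu i : u i ∈ V := Submodule.subset_span (Set.mem_range_self i)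
  refine ⟨_, fun j => b j, fun i j => b.repr ⟨u i, hu i⟩ j,
    b.orthonormal.comp_linearIsometry V.subtypeₗᵢ, fun i => ?_⟩
  simpa using congr_arg Subtype.val (b.sum_repr ⟨u i, hu i⟩).symm

variable {𝕜 H₁ H₂ K : Type*} [RCLike 𝕜]
  [NormedAddCommGroup H₁] [InnerProductSpace 𝕜 H₁]
  [NormedAddCommGroup H₂] [InnerProductSpace 𝕜 H₂]
  [NormedAddCommGroup K] [InnerProductSpace 𝕜 K]

variable (𝕜) in
/-- The elementary-tensor map `x, y ↦ x ⊗ y` into a Hilbert space tensor product. -/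
def IsInnerTensorMap (tmul : H₁ → H₂ → K) : Prop :=
  ∀ x x' y y', ⟪tmul x y, tmul x' y'⟫_𝕜 = ⟪x, x'⟫_𝕜 * ⟪y, y'⟫_𝕜

namespace IsInnerTensorMap

variable {tmul : H₁ → H₂ → K} (ht : IsInnerTensorMap 𝕜 tmul)
include ht

theorem inner_tmul (x x' : H₁) (y y' : H₂) :
    ⟪tmul x y, tmul x' y'⟫_𝕜 = ⟪x, x'⟫_𝕜 * ⟪y, y'⟫_𝕜 :=
  ht x x' y y'

theorem flip : IsInnerTensorMap 𝕜 fun y x => tmul x y :=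
  fun _ _ _ _ => (ht _ _ _ _).trans (mul_comm _ _)

theorem add_left (x x' : H₁) (y : H₂) : tmul (x + x') y = tmul x y + tmul x' y := by
  rw [← sub_eq_zero, ← inner_self_eq_zero (𝕜 := 𝕜)]
  simp only [inner_sub_left, inner_sub_right, inner_add_left, inner_add_right, ht.inner_tmul]
  ring

theorem smul_left (c : 𝕜) (x : H₁) (y : H₂) : tmul (c • x) y = c • tmul x y := by
  rw [← sub_eq_zero, ← inner_self_eq_zero (𝕜 := 𝕜)]
  simp only [inner_sub_left, inner_sub_right, inner_smul_left, inner_smul_right, ht.inner_tmul]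
  ring

def toBilin : H₁ →ₗ[𝕜] H₂ →ₗ[𝕜] K :=
  LinearMap.mk₂ 𝕜 tmul ht.add_left ht.smul_left (fun x y y' => ht.flip.add_left y y' x)
    (fun c x y => ht.flip.smul_left c y x)

@[simp]
theorem toBilin_apply (x : H₁) (y : H₂) : ht.toBilin x y = tmul x y := rfl

theorem norm_sum_orthonormal_left {ι : Type*} [Fintype ι] {e : ι → H₁} (he : Orthonormal 𝕜 e)
    (w : ι → H₂) :
    ‖∑ i, tmul (e i) (w i)‖ = ‖(WithLp.toLp 2 fun i => ‖w i‖ : EuclideanSpace ℝ ι)‖ := by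
  classical
  have hsq : ‖∑ i, tmul (e i) (w i)‖ ^ 2 = ∑ i, ‖w i‖ ^ 2 := by
    have hinner : ⟪∑ i, tmul (e i) (w i), ∑ i, tmul (e i) (w i)⟫_𝕜 = ∑ i, ⟪w i, w i⟫_𝕜 := by
      simp only [sum_inner, inner_sum, ht.inner_tmul, orthonormal_iff_ite.mp he, ite_mul, one_mul,
        zero_mul, Finset.sum_ite_eq', Finset.mem_univ, if_true]
    rw [← inner_self_eq_norm_sq (𝕜 := 𝕜), hinner, map_sum]
    exact Finset.sum_congr rfl fun i _ => inner_self_eq_norm_sq _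
  rw [← sq_eq_sq₀ (norm_nonneg _) (norm_nonneg _), hsq, EuclideanSpace.norm_sq_eq]
  simp

theorem norm_sum_orthonormal_right {ι : Type*} [Fintype ι] {f : ι → H₂} (hf : Orthonormal 𝕜 f)
    (v : ι → H₁) :
    ‖∑ i, tmul (v i) (f i)‖ = ‖(WithLp.toLp 2 fun i => ‖v i‖ : EuclideanSpace ℝ ι)‖ :=
  ht.flip.norm_sum_orthonormal_left hf v

theorem norm_sum_map_left_le {n : ℕ} (C : H₁ →L[𝕜] H₁) (u : Fin n → H₁) (w : Fin n → H₂) :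
    ‖∑ i, tmul (C (u i)) (w i)‖ ≤ ‖C‖ * ‖∑ i, tmul (u i) (w i)‖ := by
  obtain ⟨m, f, c, hf, hw⟩ := exists_orthonormal_expansion (𝕜 := 𝕜) w
  have expand (L : H₁ →ₗ[𝕜] H₁) :
      ∑ i, tmul (L (u i)) (w i) = ∑ j, tmul (L (∑ i, c i j • u i)) (f j) := by
    simpa only [hw, LinearMap.comp_apply, toBilin_apply] using
      (ht.toBilin.comp L).sum_apply_sum_smul u f c
  have expand_C := expand C
  have expand_id := expand LinearMap.id
  simp only [ContinuousLinearMap.coe_coe, LinearMap.id_apply] at expand_C expand_id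
  rw [expand_C, expand_id, ht.norm_sum_orthonormal_right hf, ht.norm_sum_orthonormal_right hf,
    ← norm_norm C, ← norm_smul]
  refine PiLp.norm_le_norm_of_forall_norm_le fun j => ?_
  simp only [PiLp.smul_apply, smul_eq_mul, norm_mul, norm_norm]
  exact C.le_opNorm _

theorem norm_sum_orthonormal_le {ι : Type*} [Fintype ι] {e : ι → H₁} (he : Orthonormal 𝕜 e)
    {p q r : ι → H₂} {α γ : ℝ} (hα : 0 ≤ α) (hγ : 0 ≤ γ)
    (h : ∀ i, ‖p i‖ ≤ α * ‖q i‖ + γ * ‖r i‖) :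
    ‖∑ i, tmul (e i) (p i)‖ ≤ α * ‖∑ i, tmul (e i) (q i)‖ + γ * ‖∑ i, tmul (e i) (r i)‖ := by
  simp only [ht.norm_sum_orthonormal_left he]
  set Q : EuclideanSpace ℝ ι := WithLp.toLp 2 fun i => ‖q i‖
  set R : EuclideanSpace ℝ ι := WithLp.toLp 2 fun i => ‖r i‖
  calc _ ≤ ‖α • Q + γ • R‖ := PiLp.norm_le_norm_of_forall_norm_le fun i => by
          simpa [Q, R, abs_of_nonneg (by positivity : 0 ≤ α * ‖q i‖ + γ * ‖r i‖)] using h i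
    _ ≤ α * ‖Q‖ + γ * ‖R‖ := by
      simpa [norm_smul, abs_of_nonneg hα, abs_of_nonneg hγ] using norm_add_le (α • Q) (γ • R)

theorem exists_orthonormal_of_mem_span {D : Submodule 𝕜 H₂} {z : K}
    (hz : z ∈ Submodule.span 𝕜 {z : K | ∃ x : H₁, ∃ y : D, z = tmul x y}) :
    ∃ (n : ℕ) (e : Fin n → H₁) (y : Fin n → D), Orthonormal 𝕜 e ∧ z = ∑ i, tmul (e i) (y i) := by
  obtain ⟨n, a, g, rfl⟩ := Submodule.mem_span_set'.mp hz
  choose x y hxy using fun i => (g i).2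
  obtain ⟨m, e, c, he, hx⟩ := exists_orthonormal_expansion (𝕜 := 𝕜) fun i => a i • x i
  refine ⟨m, e, fun j => ∑ i, c i j • y i, he, ?_⟩
  calc ∑ i, a i • (g i : K) = ∑ i, tmul (∑ j, c i j • e j) (y i) := by
        simp only [hxy, ← hx, ht.smul_left]
    _ = ∑ j, tmul (e j) (∑ i, c i j • (y i : H₂)) :=
        ht.toBilin.flip.sum_apply_sum_smul (fun i => (y i : H₂)) e c
    _ = _ := by simp only [Submodule.coe_sum, Submodule.coe_smul]

end IsInnerTensorMap

theorem LinearPMap.apply_sum {R E F ι : Type*} [Ring R] [AddCommGroup E] [Module R E]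
    [AddCommGroup F] [Module R F] [Fintype ι] (T : E →ₗ.[R] F) (v : ι → E)
    (hv : ∀ i, v i ∈ T.domain) (h : ∑ i, v i ∈ T.domain) :
    T ⟨∑ i, v i, h⟩ = ∑ i, T ⟨v i, hv i⟩ := by
  have : (⟨∑ i, v i, h⟩ : T.domain) = ∑ i, ⟨v i, hv i⟩ := Subtype.ext (by simp)
  rw [this]
  exact map_sum T.toFun _ _

theorem stmt13_general {H₁ H₂ K : Type}
    [NormedAddCommGroup H₁] [InnerProductSpace ℂ H₁]
    [NormedAddCommGroup H₂] [InnerProductSpace ℂ H₂]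
    [NormedAddCommGroup K] [InnerProductSpace ℂ K]
    (tmul : H₁ → H₂ → K)
    (hinner : ∀ (x x' : H₁) (y y' : H₂),
      @inner ℂ K _ (tmul x y) (tmul x' y') = @inner ℂ H₁ _ x x' * @inner ℂ H₂ _ y y')
    (A B : H₂ →ₗ.[ℂ] H₂)
    (a : ℝ) (ha : 0 ≤ a)
    (hdom : A.domain ≤ B.domain)
    (hrel : ∀ ε : ℝ, 0 < ε → ∃ b : ℝ, ∀ y : A.domain,
      ‖B ⟨y.1, hdom y.2⟩‖ ≤ (a + ε) * ‖A y‖ + b * ‖y.1‖)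
    (C : H₁ →L[ℂ] H₁)
    (TA TB : K →ₗ.[ℂ] K)
    (S : Submodule ℂ K)
    (hSdef : S = Submodule.span ℂ {z : K | ∃ x : H₁, ∃ y : A.domain, z = tmul x y.1})
    (hSA : S ≤ TA.domain) (hSB : S ≤ TB.domain)
    (hTA : ∀ (x : H₁) (y : A.domain) (h : tmul x y.1 ∈ TA.domain),
      TA ⟨tmul x y.1, h⟩ = tmul x (A y))
    (hTB : ∀ (x : H₁) (y : A.domain) (h : tmul x y.1 ∈ TB.domain),
      TB ⟨tmul x y.1, h⟩ = tmul (C x) (B ⟨y.1, hdom y.2⟩)) :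
    ∀ ε : ℝ, 0 < ε → ∃ b : ℝ, ∀ z (hz : z ∈ S),
      ‖TB ⟨z, hSB hz⟩‖ ≤ (a * ‖C‖ + ε) * ‖TA ⟨z, hSA hz⟩‖ + b * ‖z‖ := by
  have ht : IsInnerTensorMap ℂ tmul := hinner
  intro ε hε
  set ε' := ε / (‖C‖ + 1)
  obtain ⟨b, hb⟩ := hrel ε' (by positivity)
  have hε' : ‖C‖ * ε' ≤ ε := by
    rw [mul_div_left_comm]
    exact mul_le_of_le_one_right hε.le ((div_le_one (by positivity)).mpr (by linarith))
  refine ⟨‖C‖ * max b 0, fun z hz => ?_⟩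
  obtain ⟨n, e, y, he, rfl⟩ := ht.exists_orthonormal_of_mem_span (hSdef ▸ hz)
  have hmem i : tmul (e i) (y i) ∈ S := hSdef ▸ Submodule.subset_span ⟨e i, y i, rfl⟩
  rw [TA.apply_sum _ (fun i => hSA (hmem i)), TB.apply_sum _ (fun i => hSB (hmem i))]
  simp only [hTA, hTB]
  calc _ ≤ ‖C‖ * ‖∑ i, tmul (e i) (B ⟨y i, hdom (y i).2⟩)‖ := ht.norm_sum_map_left_le C e _
    _ ≤ ‖C‖ * ((a + ε') * ‖∑ i, tmul (e i) (A (y i))‖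
          + max b 0 * ‖∑ i, tmul (e i) (y i : H₂)‖) := by
      gcongr
      refine ht.norm_sum_orthonormal_le he (by positivity) (le_max_right _ _) fun i => ?_
      exact (hb (y i)).trans (by gcongr; exact le_max_left _ _)
    _ ≤ _ := by
      rw [mul_add, ← mul_assoc, ← mul_assoc, mul_add, mul_comm ‖C‖ a]
      gcongr

/-- Let `A, B` be (possibly unbounded) selfadjoint operators on `H₂` with
`B` being `A`-bounded with relative bound `a`, and let `C` be a bounded operator on `H₁`.
On the Hilbert tensor product `K` (axiomatized by `tmul` with multiplicative inner
products), let `TA = 1 ⊗ A` and `TB = C ⊗ B`, defined on the algebraic span `S` of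
elementary tensors `tmul x y` with `y ∈ D(A)`. Then `C ⊗ B` is `(1 ⊗ A)`-bounded with
relative bound at most `a · ‖C‖`. -/
theorem stmt13 {H₁ H₂ K : Type}
    [NormedAddCommGroup H₁] [InnerProductSpace ℂ H₁] [CompleteSpace H₁]
    [NormedAddCommGroup H₂] [InnerProductSpace ℂ H₂] [CompleteSpace H₂]
    [NormedAddCommGroup K] [InnerProductSpace ℂ K] [CompleteSpace K]
    (tmul : H₁ → H₂ → K)
    (hinner : ∀ (x x' : H₁) (y y' : H₂),
      @inner ℂ K _ (tmul x y) (tmul x' y') = @inner ℂ H₁ _ x x' * @inner ℂ H₂ _ y y')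
    (A B : H₂ →ₗ.[ℂ] H₂) (hAsa : A.adjoint = A) (hBsa : B.adjoint = B)
    (a : ℝ) (ha : 0 ≤ a)
    (hdom : A.domain ≤ B.domain)
    (hrel : ∀ ε : ℝ, 0 < ε → ∃ b : ℝ, ∀ y : A.domain,
      ‖B ⟨y.1, hdom y.2⟩‖ ≤ (a + ε) * ‖A y‖ + b * ‖y.1‖)
    (C : H₁ →L[ℂ] H₁)
    (TA TB : K →ₗ.[ℂ] K)
    (S : Submodule ℂ K)
    (hSdef : S = Submodule.span ℂ {z : K | ∃ x : H₁, ∃ y : A.domain, z = tmul x y.1})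
    (hSA : S ≤ TA.domain) (hSB : S ≤ TB.domain)
    (hTA : ∀ (x : H₁) (y : A.domain) (h : tmul x y.1 ∈ TA.domain),
      TA ⟨tmul x y.1, h⟩ = tmul x (A y))
    (hTB : ∀ (x : H₁) (y : A.domain) (h : tmul x y.1 ∈ TB.domain),
      TB ⟨tmul x y.1, h⟩ = tmul (C x) (B ⟨y.1, hdom y.2⟩)) :
    ∀ ε : ℝ, 0 < ε → ∃ b : ℝ, ∀ z (hz : z ∈ S),
      ‖TB ⟨z, hSB hz⟩‖ ≤ (a * ‖C‖ + ε) * ‖TA ⟨z, hSA hz⟩‖ + b * ‖z‖ :=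
  stmt13_general tmul hinner A B a ha hdom hrel C TA TB S hSdef hSA hSB hTA hTB
end
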